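/- Let n ≥ 1 and let H be a Hermitian matrix on n qubits normalized so that Re (trace (H * H)) = 1, and suppose H is type-I locally invertible, i.e. there exists a local unitary K₀ with K₀ * H * K₀ᴴ = -H. Then the local C-numerical range of (-H, H) is the full real line segment from -1 to +1: { x : ℝ | ∃ local unitary K, (x : ℂ) = trace ((-H) * (K * H * Kᴴ)) } = Set.Icc (-1 : ℝ) 1. (The value -1 is attained at K = 1, the value +1 at K = K₀, the set is connected because the local unitary group is connected, and it is contained in [-1, 1] by the Cauchy–Schwarz inequality for the Frobenius inner product.) -/

import Mathlib

/-! Conjugation by a unitary `K` preserves `Re tr (H * H) = 1`, so with `B = K * H * Kᴴ` the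
bound `|Re tr (H * B)| ≤ 1` follows from `Re tr ((H ± B)ᴴ * (H ± B)) ≥ 0`; the value is real
because `H` and `B` are Hermitian. It equals `-1` at `K = 1` and `1` at `K = K₀`, and the local
unitaries form a path-connected set: they are the image of `U(2)ⁿ` under the Kronecker product,
and `U(2)` is path connected since, its spectrum being finite, every unitary `u` is `exp (I • x)`
for the self-adjoint `x = arg u` of the continuous functional calculus. -/

open Matrix

/-- A `2^n`-dimensional matrix (indexed by configurations `Fin n → Fin 2`) is a
local unitary if it is the `n`-fold Kronecker product of unitary 2×2 matrices. -/
def IsLocalUnitary {n : ℕ} (K : Matrix (Fin n → Fin 2) (Fin n → Fin 2) ℂ) : Prop :=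
  ∃ u : Fin n → Matrix (Fin 2) (Fin 2) ℂ,
    (∀ ℓ, (u ℓ)ᴴ * u ℓ = 1) ∧ ∀ f g, K f g = ∏ ℓ, u ℓ (f ℓ) (g ℓ)

/-- The Pauli-z operator acting on qubit `ℓ`. -/
def Zop {n : ℕ} (ℓ : Fin n) : Matrix (Fin n → Fin 2) (Fin n → Fin 2) ℂ :=
  fun f g => if f = g then (-1 : ℂ) ^ ((f ℓ : ℕ)) else 0

/-- The Pauli-x operator acting on qubit `ℓ`. -/
def Xop {n : ℕ} (ℓ : Fin n) : Matrix (Fin n → Fin 2) (Fin n → Fin 2) ℂ :=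
  fun f g => if f ℓ ≠ g ℓ ∧ ∀ m, m ≠ ℓ → f m = g m then 1 else 0

/-- The Pauli-y operator acting on qubit `ℓ`. -/
def Yop {n : ℕ} (ℓ : Fin n) : Matrix (Fin n → Fin 2) (Fin n → Fin 2) ℂ :=
  fun f g => if f ℓ ≠ g ℓ ∧ ∀ m, m ≠ ℓ → f m = g m then
    Complex.I * (-1 : ℂ) ^ ((f ℓ : ℕ) + 1) else 0

section UnitaryGroup

open Complex Unitary selfAdjoint

lemma Unitary.expUnitary_argSelfAdjoint_of_continuousOn {A : Type*} [CStarAlgebra A]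
    {u : unitary A} (hu : ContinuousOn arg (spectrum ℂ (u : A))) :
    expUnitary (argSelfAdjoint u) = u := by
  ext
  rw [expUnitary_coe, argSelfAdjoint_coe, ← CFC.exp_eq_normedSpace_exp (𝕜 := ℂ),
    ← cfc_comp_smul .., ← cfc_comp' ..]
  conv_rhs => rw [← cfc_id' ℂ (u : A)]
  refine cfc_congr fun y hy ↦ ?_
  have hy₁ : ‖y‖ = 1 := spectrum.norm_eq_one_of_unitary u.2 hy
  simpa [hy₁, ← exp_eq_exp_ℂ, mul_comm I] using norm_mul_exp_arg_mul_I y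

instance Matrix.unitaryGroup.instPathConnectedSpace {n : Type*} [Fintype n] [DecidableEq n] :
    PathConnectedSpace (Matrix.unitaryGroup n ℂ) := by
  -- the operator norm makes `Matrix n n ℂ` a C⋆-algebra without changing its topology
  open scoped Matrix.Norms.L2Operator in
  have joined_one (u : unitary (Matrix n n ℂ)) : Joined 1 u := by
    rw [← expUnitary_argSelfAdjoint_of_continuousOn
      ((Matrix.finite_spectrum (u : Matrix n n ℂ)).continuousOn arg)]
    exact joined_one_expUnitary _
  exact ⟨⟨1⟩, fun u v => (joined_one u).symm.trans (joined_one v)⟩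

end UnitaryGroup

namespace Matrix

section PiKronecker

variable {ι R : Type*} [Fintype ι] {m p q : ι → Type*}

def piKronecker [CommMonoid R] (u : ∀ i, Matrix (m i) (p i) R) :
    Matrix (∀ i, m i) (∀ i, p i) R :=
  of fun f g => ∏ i, u i (f i) (g i)

@[simp]
lemma piKronecker_apply [CommMonoid R] (u : ∀ i, Matrix (m i) (p i) R) (f : ∀ i, m i)
    (g : ∀ i, p i) : piKronecker u f g = ∏ i, u i (f i) (g i) := rfl

lemma piKronecker_mul [CommSemiring R] [DecidableEq ι] [∀ i, Fintype (p i)]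
    (u : ∀ i, Matrix (m i) (p i) R) (v : ∀ i, Matrix (p i) (q i) R) :
    piKronecker (fun i => u i * v i) = piKronecker u * piKronecker v := by
  ext f g
  simp only [piKronecker_apply, mul_apply, Finset.prod_univ_sum, Fintype.piFinset_univ,
    Finset.prod_mul_distrib]

lemma piKronecker_one [CommMonoidWithZero R] [∀ i, DecidableEq (m i)] [DecidableEq (∀ i, m i)] :
    piKronecker (fun i => (1 : Matrix (m i) (m i) R)) = 1 := by
  ext f g
  by_cases h : f = g
  · subst h
    simp
  · obtain ⟨i, hi⟩ := Function.ne_iff.mp h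
    rw [piKronecker_apply, one_apply_ne h]
    exact Finset.prod_eq_zero (Finset.mem_univ i) (one_apply_ne hi)

lemma conjTranspose_piKronecker [CommMonoid R] [StarMul R] (u : ∀ i, Matrix (m i) (p i) R) :
    (piKronecker u)ᴴ = piKronecker fun i => (u i)ᴴ := by
  ext f g
  simp [star_prod]

lemma continuous_piKronecker [CommMonoid R] [TopologicalSpace R] [ContinuousMul R] :
    Continuous (piKronecker : (∀ i, Matrix (m i) (p i) R) → _) :=
  continuous_matrix fun f g => continuous_finsetProd _ fun i _ => by fun_prop

end PiKronecker

section Trace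

open scoped ComplexOrder

variable {n 𝕜 : Type*} [Fintype n] [RCLike 𝕜]

lemma two_mul_abs_re_trace_conjTranspose_mul_le (A B : Matrix n n 𝕜) :
    2 * |RCLike.re (Aᴴ * B).trace| ≤ RCLike.re (Aᴴ * A).trace + RCLike.re (Bᴴ * B).trace := by
  have nonneg (C : Matrix n n 𝕜) : 0 ≤ RCLike.re (Cᴴ * C).trace :=
    (RCLike.nonneg_iff.mp (posSemidef_conjTranspose_mul_self C).trace_nonneg).1
  have hBA : RCLike.re (Bᴴ * A).trace = RCLike.re (Aᴴ * B).trace := by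
    rw [← conjTranspose_conjTranspose A, ← conjTranspose_mul, trace_conjTranspose,
      RCLike.star_def, RCLike.conj_re, conjTranspose_conjTranspose]
  have hplus := nonneg (A + B)
  have hminus := nonneg (A - B)
  simp only [conjTranspose_add, conjTranspose_sub, add_mul, mul_add, sub_mul, mul_sub,
    trace_add, trace_sub, map_add, map_sub, hBA] at hplus hminus
  rcases abs_cases (RCLike.re (Aᴴ * B).trace) with ⟨h, -⟩ | ⟨h, -⟩ <;> rw [h] <;> linarith

lemma IsHermitian.ofReal_re_trace_mul {A B : Matrix n n 𝕜} (hA : A.IsHermitian)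
    (hB : B.IsHermitian) : (RCLike.re (A * B).trace : 𝕜) = (A * B).trace := by
  rw [← RCLike.conj_eq_iff_re, ← RCLike.star_def, ← trace_conjTranspose, conjTranspose_mul,
    hA.eq, hB.eq, trace_mul_comm]

lemma trace_mul_mul_conjTranspose_of_mem_unitaryGroup [DecidableEq n] {U : Matrix n n 𝕜}
    (hU : U ∈ unitaryGroup n 𝕜) (A : Matrix n n 𝕜) : (U * A * Uᴴ).trace = A.trace := by
  rw [trace_mul_cycle, ← star_eq_conjTranspose, mem_unitaryGroup_iff'.mp hU, one_mul]

lemma IsHermitian.abs_re_trace_mul_unitary_conj_le [DecidableEq n] {H U : Matrix n n 𝕜}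
    (hH : H.IsHermitian) (hU : U ∈ unitaryGroup n 𝕜) :
    |RCLike.re (H * (U * H * Uᴴ)).trace| ≤ RCLike.re (H * H).trace := by
  have hUH := isHermitian_mul_mul_conjTranspose U hH
  have hsq : (U * H * Uᴴ) * (U * H * Uᴴ) = U * (H * H) * Uᴴ := by
    have hUU : Uᴴ * U = 1 := mem_unitaryGroup_iff'.mp hU
    simp only [Matrix.mul_assoc, ← Matrix.mul_assoc Uᴴ U, hUU, Matrix.one_mul]
  have := two_mul_abs_re_trace_conjTranspose_mul_le H (U * H * Uᴴ)
  rw [hH.eq, hUH.eq, hsq, trace_mul_mul_conjTranspose_of_mem_unitaryGroup hU] at this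
  linarith

end Trace

end Matrix

section LocalUnitary

variable {n : ℕ}

lemma isLocalUnitary_iff {K : Matrix (Fin n → Fin 2) (Fin n → Fin 2) ℂ} :
    IsLocalUnitary K ↔
      ∃ u : Fin n → unitaryGroup (Fin 2) ℂ, piKronecker (fun ℓ => (u ℓ : Matrix _ _ ℂ)) = K := by
  constructor
  · rintro ⟨u, hu, hK⟩
    exact ⟨fun ℓ => ⟨u ℓ, mem_unitaryGroup_iff'.mpr (hu ℓ)⟩, ext fun f g => (hK f g).symm⟩
  · rintro ⟨u, rfl⟩
    exact ⟨fun ℓ => u ℓ, fun ℓ => mem_unitaryGroup_iff'.mp (u ℓ).2, fun f g => rfl⟩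

lemma isLocalUnitary_one : IsLocalUnitary (1 : Matrix (Fin n → Fin 2) (Fin n → Fin 2) ℂ) :=
  isLocalUnitary_iff.mpr ⟨1, piKronecker_one⟩

lemma IsLocalUnitary.mem_unitaryGroup {K : Matrix (Fin n → Fin 2) (Fin n → Fin 2) ℂ}
    (hK : IsLocalUnitary K) : K ∈ unitaryGroup (Fin n → Fin 2) ℂ := by
  obtain ⟨u, rfl⟩ := isLocalUnitary_iff.mp hK
  rw [mem_unitaryGroup_iff', star_eq_conjTranspose, conjTranspose_piKronecker,
    ← piKronecker_mul]
  simp_rw [← star_eq_conjTranspose, Unitary.star_mul_self_of_mem (u _).2]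
  exact piKronecker_one

lemma isPathConnected_setOf_isLocalUnitary :
    IsPathConnected {K : Matrix (Fin n → Fin 2) (Fin n → Fin 2) ℂ | IsLocalUnitary K} := by
  have hrange : {K | IsLocalUnitary K} = Set.range fun u : Fin n → unitaryGroup (Fin 2) ℂ =>
      piKronecker fun ℓ => (u ℓ : Matrix (Fin 2) (Fin 2) ℂ) :=
    Set.ext fun K => isLocalUnitary_iff
  rw [hrange]
  exact isPathConnected_range (continuous_piKronecker.comp (by fun_prop))

end LocalUnitary

theorem stmt19_general (n : ℕ)
    (H : Matrix (Fin n → Fin 2) (Fin n → Fin 2) ℂ) (hH : Hᴴ = H)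
    (hnorm : ((H * H).trace).re = 1)
    (K₀ : Matrix (Fin n → Fin 2) (Fin n → Fin 2) ℂ)
    (hK₀ : IsLocalUnitary K₀) (hinv : K₀ * H * K₀ᴴ = -H) :
    { x : ℝ | ∃ K : Matrix (Fin n → Fin 2) (Fin n → Fin 2) ℂ,
        IsLocalUnitary K ∧ (x : ℂ) = ((-H) * (K * H * Kᴴ)).trace } =
      Set.Icc (-1 : ℝ) 1 := by
  have hH' : H.IsHermitian := hH
  apply Set.Subset.antisymm
  · rintro x ⟨K, hK, hx⟩
    have hx' : x = -(H * (K * H * Kᴴ)).trace.re := by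
      simpa [Matrix.neg_mul] using congrArg Complex.re hx
    have hbound := hH'.abs_re_trace_mul_unitary_conj_le hK.mem_unitaryGroup
    rw [RCLike.re_to_complex, RCLike.re_to_complex, hnorm, abs_le] at hbound
    rw [hx', Set.mem_Icc]
    constructor <;> linarith
  · intro x hx
    let F := fun K : Matrix (Fin n → Fin 2) (Fin n → Fin 2) ℂ => ((-H) * (K * H * Kᴴ)).trace.re
    have hF1 : F 1 = -1 := by simp [F, hnorm]
    have hFK₀ : F K₀ = 1 := by simp only [F, hinv, neg_mul_neg, hnorm]
    have hF : Continuous F := by fun_prop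
    have hvalues := (isPathConnected_setOf_isLocalUnitary.image hF).isConnected.isPreconnected
    obtain ⟨K, hK, rfl⟩ := hvalues.Icc_subset ⟨1, isLocalUnitary_one, hF1⟩ ⟨K₀, hK₀, hFK₀⟩ hx
    exact ⟨K, hK, hH'.neg.ofReal_re_trace_mul (isHermitian_mul_mul_conjTranspose K hH')⟩

theorem stmt19 (n : ℕ) (hn : 1 ≤ n)
    (H : Matrix (Fin n → Fin 2) (Fin n → Fin 2) ℂ) (hH : Hᴴ = H)
    (hnorm : ((H * H).trace).re = 1)
    (K₀ : Matrix (Fin n → Fin 2) (Fin n → Fin 2) ℂ)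
    (hK₀ : IsLocalUnitary K₀) (hinv : K₀ * H * K₀ᴴ = -H) :
    { x : ℝ | ∃ K : Matrix (Fin n → Fin 2) (Fin n → Fin 2) ℂ,
        IsLocalUnitary K ∧ (x : ℂ) = ((-H) * (K * H * Kᴴ)).trace } =
      Set.Icc (-1 : ℝ) 1 :=
  stmt19_general n H hH hnorm K₀ hK₀ hinv
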